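/- arXiv:math/0407218 — 3 statements merged into one kernel-verified Lean document; each statement's English description precedes it below -/
import Mathlib

section
/- In H_{n,r}(0), for every 1 ≤ i ≤ n−1 and every color word c ∈ C^n one has: T_i L_c = L_{cσ_i} T_i − L_c if c_i < c_{i+1}; T_i L_c = L_c T_i if c_i = c_{i+1}; and T_i L_c = L_{cσ_i} T_i + L_{cσ_i} if c_i > c_{i+1}. Here cσ_i denotes the word obtained from c by exchanging c_i and c_{i+1}. -/
noncomputable section

open Polynomial

namespace AKS0

/-- Generators: `Sum.inl i` is `T_{i+1}` (0-indexed `T_i`, acting on positions `i, i+1`),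
`Sum.inr j` is `ξ_{j+1}` (0-indexed `ξ_j`). -/
abbrev Gen (n : ℕ) : Type := Fin (n - 1) ⊕ Fin n

abbrev FreeAKS (n : ℕ) : Type := FreeAlgebra ℂ (Gen n)

def tGen (n : ℕ) (i : Fin (n - 1)) : FreeAKS n := FreeAlgebra.ι ℂ (Sum.inl i)

def xGen (n : ℕ) (j : Fin n) : FreeAKS n := FreeAlgebra.ι ℂ (Sum.inr j)

/-- The position `i` of `Fin (n-1)`, viewed in `Fin n`. -/
def idx0 (n : ℕ) (i : Fin (n - 1)) : Fin n := ⟨i.1, by have := i.2; omega⟩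

/-- The position `i+1` of `Fin n`, for `i : Fin (n-1)`. -/
def idx1 (n : ℕ) (i : Fin (n - 1)) : Fin n := ⟨i.1 + 1, by have := i.2; omega⟩

/-- The Lagrange polynomial `P_k(X) = ∏_{l ≠ k} (X - u_l)/(u_k - u_l)`. -/
def lagPoly (r : ℕ) (u : Fin r → ℂ) (k : Fin r) : ℂ[X] :=
  ∏ l ∈ Finset.univ.erase k, (C ((u k - u l)⁻¹) * (X - C (u l)))

/-- The defining relations of the Ariki-Koike-Shoji algebra `H_{n,r}(q)`. -/
inductive Rel (n r : ℕ) (u : Fin r → ℂ) (q : ℂ) : FreeAKS n → FreeAKS n → Prop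
  | quad (i : Fin (n - 1)) :
      Rel n r u q ((tGen n i - algebraMap ℂ (FreeAKS n) q) * (tGen n i + 1)) 0
  | braid (i j : Fin (n - 1)) (h : (j : ℕ) = (i : ℕ) + 1) :
      Rel n r u q (tGen n i * tGen n j * tGen n i) (tGen n j * tGen n i * tGen n j)
  | commTT (i j : Fin (n - 1)) (h : (i : ℕ) + 2 ≤ (j : ℕ) ∨ (j : ℕ) + 2 ≤ (i : ℕ)) :
      Rel n r u q (tGen n i * tGen n j) (tGen n j * tGen n i)
  | xPoly (j : Fin n) :
      Rel n r u q (Polynomial.aeval (xGen n j) (∏ l : Fin r, (X - C (u l)))) 0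
  | commXX (i j : Fin n) :
      Rel n r u q (xGen n i * xGen n j) (xGen n j * xGen n i)
  | cross (i : Fin (n - 1)) :
      Rel n r u q (tGen n i * xGen n (idx0 n i))
        (xGen n (idx1 n i) * tGen n i -
          (q - 1) • ∑ p ∈ Finset.univ.filter (fun p : Fin r × Fin r => p.1 < p.2),
            (u p.2 - u p.1) •
              (Polynomial.aeval (xGen n (idx0 n i)) (lagPoly r u p.1) *
                Polynomial.aeval (xGen n (idx1 n i)) (lagPoly r u p.2)))
  | sumComm (i : Fin (n - 1)) :
      Rel n r u q (tGen n i * (xGen n (idx1 n i) + xGen n (idx0 n i)))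
        ((xGen n (idx1 n i) + xGen n (idx0 n i)) * tGen n i)
  | commTX (i : Fin (n - 1)) (j : Fin n) (h : j ≠ idx0 n i) (h' : j ≠ idx1 n i) :
      Rel n r u q (tGen n i * xGen n j) (xGen n j * tGen n i)

/-- The Ariki-Koike-Shoji algebra `H_{n,r}(q)` (Shoji's presentation, normalized). -/
abbrev AKSAlg (n r : ℕ) (u : Fin r → ℂ) (q : ℂ) : Type := RingQuot (Rel n r u q)

/-- The generator `T_i` in `H_{n,r}(q)`. -/
def Ti (n r : ℕ) (u : Fin r → ℂ) (q : ℂ) (i : Fin (n - 1)) : AKSAlg n r u q :=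
  RingQuot.mkAlgHom ℂ (Rel n r u q) (tGen n i)

/-- The generator `ξ_j` in `H_{n,r}(q)`. -/
def Xi (n r : ℕ) (u : Fin r → ℂ) (q : ℂ) (j : Fin n) : AKSAlg n r u q :=
  RingQuot.mkAlgHom ℂ (Rel n r u q) (xGen n j)

/-- `L_c = P_{c_1}(ξ_1) ⋯ P_{c_n}(ξ_n)`. -/
def Lc (n r : ℕ) (u : Fin r → ℂ) (q : ℂ) (c : Fin n → Fin r) : AKSAlg n r u q :=
  (List.ofFn fun j : Fin n => Polynomial.aeval (Xi n r u q j) (lagPoly r u (c j))).prod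

end AKS0

namespace AKS0

/-- The color word `cσ_i`, obtained from `c` by exchanging `c_i` and `c_{i+1}`. -/
def swapWord (n r : ℕ) (c : Fin n → Fin r) (i : Fin (n - 1)) : Fin n → Fin r :=
  c ∘ Equiv.swap (idx0 n i) (idx1 n i)

end AKS0

/-! Write `e_{ab} = P_a(ξ_i) P_b(ξ_{i+1})` and `S = ∑_{a<b} (u_b - u_a) e_{ab}`. Since `ξ_i`
and `ξ_{i+1}` commute and are killed by `∏ (X - u_l)`, the `e_{ab}` are orthogonal idempotents
with `∑ e_{ab} = 1`, `ξ_i e_{ab} = u_a e_{ab}`, `ξ_{i+1} e_{ab} = u_b e_{ab}` and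
`S e_{cd} = [c < d] (u_d - u_c) e_{cd}`. Sandwiching `T ξ_i = ξ_{i+1} T + S` and
`T ξ_{i+1} = ξ_i T - S` between `e_{c'd'}` and `e_{cd}` gives
`(u_c - u_{d'}) e_{c'd'} T e_{cd} = e_{c'd'} S e_{cd} = -(u_d - u_{c'}) e_{c'd'} T e_{cd}`,
so `e_{c'd'} T e_{cd} = 0` unless `(c', d')` is `(c, d)` or `(d, c)`, and
`e_{ab} T e_{ab} = -[a < b] e_{ab}` for `a ≠ b`. Inserting `1 = ∑ e` on either side of `T`
yields `T e_{ab} = e_{ba} T - [a < b] e_{ab} + [b < a] e_{ba}`. Finally `L_c = e_{c_i c_{i+1}} R`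
and `L_{cσ_i} = e_{c_{i+1} c_i} R` for one `R` commuting with `T_i`. -/

namespace Lagrange

variable {F A ι : Type*} [Field F] [Ring A] [Algebra F A] {s : Finset ι} {v : ι → F}

theorem nodal_dvd (hvs : Set.InjOn v s) {p : F[X]} (hp : ∀ i ∈ s, p.eval (v i) = 0) :
    nodal s v ∣ p :=
  Finset.prod_dvd_of_coprime
    (fun _ hi _ hj hij =>
      isCoprime_X_sub_C_of_isUnit_sub (sub_ne_zero.mpr (hvs.ne hi hj hij)).isUnit)
    fun i hi => dvd_iff_isRoot.mpr (hp i hi)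

variable {x : A}

theorem aeval_eq_aeval_of_eval_eq (hvs : Set.InjOn v s) (hx : aeval x (nodal s v) = 0)
    {p q : F[X]} (h : ∀ i ∈ s, p.eval (v i) = q.eval (v i)) : aeval x p = aeval x q := by
  obtain ⟨t, ht⟩ := nodal_dvd hvs (p := p - q) fun i hi => by rw [eval_sub, h i hi, sub_self]
  rw [← sub_eq_zero, ← map_sub, ht, map_mul, hx, zero_mul]

variable [DecidableEq ι]

theorem eval_basis_eq_ite (hvs : Set.InjOn v s) (i : ι) {k : ι} (hk : k ∈ s) :
    (Lagrange.basis s v i).eval (v k) = if i = k then 1 else 0 := by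
  split_ifs with hik
  · subst hik; exact eval_basis_self hvs hk
  · exact eval_basis_of_ne hik hk

theorem aeval_basis_mul_aeval_basis (hvs : Set.InjOn v s) (hx : aeval x (nodal s v) = 0)
    (i j : ι) :
    aeval x (Lagrange.basis s v i) * aeval x (Lagrange.basis s v j) =
      if i = j then aeval x (Lagrange.basis s v i) else 0 := by
  rw [← map_mul]
  split_ifs with hij
  · subst hij
    refine aeval_eq_aeval_of_eval_eq hvs hx fun k hk => ?_
    rw [eval_mul, eval_basis_eq_ite hvs _ hk]
    split_ifs <;> simp
  · rw [← map_zero (aeval (R := F) x)]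
    refine aeval_eq_aeval_of_eval_eq hvs hx fun k hk => ?_
    rw [eval_mul, eval_basis_eq_ite hvs _ hk, eval_basis_eq_ite hvs _ hk, eval_zero]
    split_ifs with hik hjk <;> simp_all

theorem sum_aeval_basis (hvs : Set.InjOn v s) (hx : aeval x (nodal s v) = 0) :
    ∑ i ∈ s, aeval x (Lagrange.basis s v i) = 1 := by
  rw [← map_sum, ← map_one (aeval (R := F) x)]
  refine aeval_eq_aeval_of_eval_eq hvs hx fun k hk => ?_
  simp [eval_finsetSum, eval_basis_eq_ite hvs _ hk, hk]

theorem mul_aeval_basis (hvs : Set.InjOn v s) (hx : aeval x (nodal s v) = 0) (i : ι) :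
    x * aeval x (Lagrange.basis s v i) = v i • aeval x (Lagrange.basis s v i) := by
  calc x * aeval x (Lagrange.basis s v i) = aeval x (X * Lagrange.basis s v i) := by
        rw [map_mul, aeval_X]
    _ = aeval x (C (v i) * Lagrange.basis s v i) :=
        aeval_eq_aeval_of_eval_eq hvs hx fun k hk => by
          rw [eval_mul, eval_mul, eval_X, eval_C, eval_basis_eq_ite hvs _ hk]
          split_ifs with hik <;> simp [hik]
    _ = v i • aeval x (Lagrange.basis s v i) := by rw [map_mul, aeval_C, Algebra.smul_def]

end Lagrange

theorem Commute.aeval_right {R A : Type*} [CommSemiring R] [Semiring A] [Algebra R A] {a b : A}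
    (h : Commute a b) (p : R[X]) : Commute a (aeval b p) :=
  Algebra.commute_of_mem_adjoin_singleton_of_commute (aeval_mem_adjoin_singleton R b) h

theorem Commute.aeval_aeval {R A : Type*} [CommSemiring R] [Semiring A] [Algebra R A] {a b : A}
    (h : Commute a b) (p q : R[X]) : Commute (aeval a p) (aeval b q) :=
  ((h.aeval_right q).symm.aeval_right p).symm

namespace AKS0

open Lagrange Finset

section PairIdempotent

variable {K A : Type*} [Field K] [Ring A] [Algebra K A] {r : ℕ}

def pairIdem (u : Fin r → K) (x y : A) (a b : Fin r) : A :=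
  aeval x (Lagrange.basis univ u a) * aeval y (Lagrange.basis univ u b)

def crossSum (u : Fin r → K) (x y : A) : A :=
  ∑ p ∈ univ.filter (fun p : Fin r × Fin r => p.1 < p.2),
    (u p.2 - u p.1) • pairIdem u x y p.1 p.2

variable {u : Fin r → K} {x y : A}

theorem pairIdem_mul_pairIdem (hu : Function.Injective u) (hx : aeval x (nodal univ u) = 0)
    (hy : aeval y (nodal univ u) = 0) (hxy : Commute x y) (a b c d : Fin r) :
    pairIdem u x y a b * pairIdem u x y c d =
      if a = c ∧ b = d then pairIdem u x y a b else 0 := by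
  have hcomm := (hxy.symm.aeval_aeval (Lagrange.basis univ u b) (Lagrange.basis univ u c)).eq
  calc pairIdem u x y a b * pairIdem u x y c d
      = (aeval x (Lagrange.basis univ u a) * aeval x (Lagrange.basis univ u c)) *
          (aeval y (Lagrange.basis univ u b) * aeval y (Lagrange.basis univ u d)) := by
        simp only [pairIdem, mul_assoc, ← mul_assoc (aeval y _) (aeval x _), hcomm]
    _ = _ := by
        rw [aeval_basis_mul_aeval_basis hu.injOn hx, aeval_basis_mul_aeval_basis hu.injOn hy]
        by_cases hac : a = c <;> by_cases hbd : b = d <;> simp [hac, hbd, pairIdem]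

theorem sum_pairIdem (hu : Function.Injective u) (hx : aeval x (nodal univ u) = 0)
    (hy : aeval y (nodal univ u) = 0) :
    ∑ p : Fin r × Fin r, pairIdem u x y p.1 p.2 = 1 := by
  simp only [Fintype.sum_prod_type, pairIdem]
  rw [← sum_mul_sum, sum_aeval_basis hu.injOn hx, sum_aeval_basis hu.injOn hy, one_mul]

theorem commute_fst_pairIdem (hxy : Commute x y) (a b : Fin r) :
    Commute x (pairIdem u x y a b) :=
  ((Commute.refl x).aeval_right _).mul_right (hxy.aeval_right _)

theorem commute_snd_pairIdem (hxy : Commute x y) (a b : Fin r) :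
    Commute y (pairIdem u x y a b) :=
  (hxy.symm.aeval_right _).mul_right ((Commute.refl y).aeval_right _)

theorem fst_mul_pairIdem (hu : Function.Injective u) (hx : aeval x (nodal univ u) = 0)
    (a b : Fin r) : x * pairIdem u x y a b = u a • pairIdem u x y a b := by
  rw [pairIdem, ← mul_assoc, mul_aeval_basis hu.injOn hx, smul_mul_assoc]

theorem snd_mul_pairIdem (hu : Function.Injective u) (hy : aeval y (nodal univ u) = 0)
    (hxy : Commute x y) (a b : Fin r) : y * pairIdem u x y a b = u b • pairIdem u x y a b := by
  rw [pairIdem, ← mul_assoc, (hxy.symm.aeval_right _).eq, mul_assoc, mul_aeval_basis hu.injOn hy,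
    mul_smul_comm]

theorem crossSum_mul_pairIdem (hu : Function.Injective u) (hx : aeval x (nodal univ u) = 0)
    (hy : aeval y (nodal univ u) = 0) (hxy : Commute x y) (c d : Fin r) :
    crossSum u x y * pairIdem u x y c d =
      (if c < d then u d - u c else 0) • pairIdem u x y c d := by
  simp only [crossSum, sum_mul, smul_mul_assoc, pairIdem_mul_pairIdem hu hx hy hxy]
  split_ifs with hcd
  · rw [sum_eq_single_of_mem (c, d) (by simp [hcd])]
    · simp
    · rintro p - hp
      rw [if_neg fun h => hp (Prod.ext h.1 h.2), smul_zero]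
  · refine (sum_eq_zero fun p hp => ?_).trans (zero_smul K _).symm
    rw [if_neg, smul_zero]
    rintro ⟨rfl, rfl⟩
    exact hcd (mem_filter.mp hp).2

variable {T : A}

theorem mul_snd_eq_of_mul_fst_eq (hT : T * x = y * T + crossSum u x y)
    (hTxy : Commute T (x + y)) : T * y = x * T - crossSum u x y := by
  have h : T * x + T * y = x * T + y * T := by rw [← mul_add, hTxy.eq, add_mul]
  rw [hT] at h
  rw [← add_left_cancel_iff (a := y * T + crossSum u x y), h]
  abel

theorem sandwich_fst (hu : Function.Injective u) (hx : aeval x (nodal univ u) = 0)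
    (hy : aeval y (nodal univ u) = 0) (hxy : Commute x y) (hT : T * x = y * T + crossSum u x y)
    (c' d' c d : Fin r) :
    (u c - u d') • (pairIdem u x y c' d' * T * pairIdem u x y c d) =
      pairIdem u x y c' d' * (crossSum u x y * pairIdem u x y c d) := by
  have hy' : pairIdem u x y c' d' * y = u d' • pairIdem u x y c' d' := by
    rw [← (commute_snd_pairIdem hxy c' d').eq, snd_mul_pairIdem hu hy hxy]
  have h := congrArg (pairIdem u x y c' d' * · * pairIdem u x y c d) hT
  simp only [mul_assoc, fst_mul_pairIdem hu hx, add_mul, mul_add] at h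
  rw [← mul_assoc (pairIdem u x y c' d') y, hy', mul_smul_comm, mul_smul_comm,
    smul_mul_assoc] at h
  rw [mul_assoc, sub_smul, h]
  abel

theorem sandwich_snd (hu : Function.Injective u) (hx : aeval x (nodal univ u) = 0)
    (hy : aeval y (nodal univ u) = 0) (hxy : Commute x y) (hT : T * x = y * T + crossSum u x y)
    (hTxy : Commute T (x + y)) (c' d' c d : Fin r) :
    (u d - u c') • (pairIdem u x y c' d' * T * pairIdem u x y c d) =
      -(pairIdem u x y c' d' * (crossSum u x y * pairIdem u x y c d)) := by
  have hx' : pairIdem u x y c' d' * x = u c' • pairIdem u x y c' d' := by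
    rw [← (commute_fst_pairIdem hxy c' d').eq, fst_mul_pairIdem hu hx]
  have h := congrArg (pairIdem u x y c' d' * · * pairIdem u x y c d)
    (mul_snd_eq_of_mul_fst_eq hT hTxy)
  simp only [mul_assoc, snd_mul_pairIdem hu hy hxy, sub_mul, mul_sub] at h
  rw [← mul_assoc (pairIdem u x y c' d') x, hx', mul_smul_comm, mul_smul_comm,
    smul_mul_assoc] at h
  rw [mul_assoc, sub_smul, h]
  abel

theorem sandwich_eq_zero (hu : Function.Injective u) (hx : aeval x (nodal univ u) = 0)
    (hy : aeval y (nodal univ u) = 0) (hxy : Commute x y) (hT : T * x = y * T + crossSum u x y)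
    (hTxy : Commute T (x + y)) {c' d' c d : Fin r} (hdiag : ¬(c' = c ∧ d' = d))
    (hswap : ¬(c' = d ∧ d' = c)) :
    pairIdem u x y c' d' * T * pairIdem u x y c d = 0 := by
  have hS : pairIdem u x y c' d' * (crossSum u x y * pairIdem u x y c d) = 0 := by
    rw [crossSum_mul_pairIdem hu hx hy hxy, mul_smul_comm, pairIdem_mul_pairIdem hu hx hy hxy,
      if_neg hdiag, smul_zero]
  by_cases hd : d' = c
  · have hne : u d - u c' ≠ 0 := sub_ne_zero.mpr fun h => hswap ⟨(hu h).symm, hd⟩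
    rw [← smul_eq_zero_iff_right hne, sandwich_snd hu hx hy hxy hT hTxy, hS, neg_zero]
  · have hne : u c - u d' ≠ 0 := sub_ne_zero.mpr fun h => hd (hu h).symm
    rw [← smul_eq_zero_iff_right hne, sandwich_fst hu hx hy hxy hT, hS]

theorem sandwich_self (hu : Function.Injective u) (hx : aeval x (nodal univ u) = 0)
    (hy : aeval y (nodal univ u) = 0) (hxy : Commute x y) (hT : T * x = y * T + crossSum u x y)
    {a b : Fin r} (hab : a ≠ b) :
    pairIdem u x y a b * T * pairIdem u x y a b = -(if a < b then pairIdem u x y a b else 0) := by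
  have hne : u a - u b ≠ 0 := sub_ne_zero.mpr (hu.ne hab)
  refine smul_right_injective A hne ?_
  simp only
  rw [sandwich_fst hu hx hy hxy hT, crossSum_mul_pairIdem hu hx hy hxy, mul_smul_comm,
    pairIdem_mul_pairIdem hu hx hy hxy, if_pos (⟨rfl, rfl⟩ : a = a ∧ b = b)]
  split_ifs <;> module

theorem mul_pairIdem (hu : Function.Injective u) (hx : aeval x (nodal univ u) = 0)
    (hy : aeval y (nodal univ u) = 0) (hxy : Commute x y) (hT : T * x = y * T + crossSum u x y)
    (hTxy : Commute T (x + y)) (a b : Fin r) :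
    T * pairIdem u x y a b = pairIdem u x y b a * T - (if a < b then pairIdem u x y a b else 0) +
      (if b < a then pairIdem u x y b a else 0) := by
  set e := pairIdem u x y
  have hzero : ∀ {c' d' c d : Fin r}, ¬(c' = c ∧ d' = d) → ¬(c' = d ∧ d' = c) →
      e c' d' * T * e c d = 0 := sandwich_eq_zero hu hx hy hxy hT hTxy
  have hL : T * e a b = ∑ p : Fin r × Fin r, e p.1 p.2 * T * e a b := by
    rw [← sum_mul, ← sum_mul, sum_pairIdem hu hx hy, one_mul]
  have hR : e b a * T = ∑ p : Fin r × Fin r, e b a * T * e p.1 p.2 := by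
    rw [← mul_sum, sum_pairIdem hu hx hy, mul_one]
  by_cases hab : a = b
  · subst hab
    rw [hL, hR, Fintype.sum_eq_single (a, a), Fintype.sum_eq_single (a, a)]
    · simp
    all_goals
      rintro ⟨c, d⟩ h
      simp only [ne_eq, Prod.mk.injEq] at h
      exact hzero (by tauto) (by tauto)
  · have hpair : ((a, b) : Fin r × Fin r) ≠ (b, a) := fun h => hab (congrArg Prod.fst h)
    rw [hL, hR, Fintype.sum_eq_add (a, b) (b, a) hpair, Fintype.sum_eq_add (a, b) (b, a) hpair,
      sandwich_self hu hx hy hxy hT hab, sandwich_self hu hx hy hxy hT (Ne.symm hab)]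
    · abel
    all_goals
      rintro ⟨c, d⟩ h
      simp only [ne_eq, Prod.mk.injEq] at h
      exact hzero (by tauto) (by tauto)

end PairIdempotent

variable {n r : ℕ} {u : Fin r → ℂ} {q : ℂ}

theorem aeval_Xi_nodal (j : Fin n) : aeval (Xi n r u q j) (nodal univ u) = 0 := by
  have h := RingQuot.mkAlgHom_rel ℂ (Rel.xPoly (u := u) (q := q) j)
  rwa [map_zero, ← aeval_algHom_apply] at h

theorem commute_Xi_Xi (j k : Fin n) : Commute (Xi n r u q j) (Xi n r u q k) := by
  have h := RingQuot.mkAlgHom_rel ℂ (Rel.commXX (n := n) (u := u) (q := q) j k)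
  rwa [map_mul, map_mul] at h

theorem commute_Ti_Xi (i : Fin (n - 1)) {j : Fin n} (h0 : j ≠ idx0 n i) (h1 : j ≠ idx1 n i) :
    Commute (Ti n r u q i) (Xi n r u q j) := by
  have h := RingQuot.mkAlgHom_rel ℂ (Rel.commTX (u := u) (q := q) i j h0 h1)
  rwa [map_mul, map_mul] at h

theorem commute_Ti_Xi_add_Xi (i : Fin (n - 1)) :
    Commute (Ti n r u q i) (Xi n r u q (idx0 n i) + Xi n r u q (idx1 n i)) := by
  have h := RingQuot.mkAlgHom_rel ℂ (Rel.sumComm (u := u) (q := q) i)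
  rw [map_mul, map_mul, map_add, add_comm] at h
  exact h

theorem Ti_mul_Xi_idx0 (i : Fin (n - 1)) :
    Ti n r u 0 i * Xi n r u 0 (idx0 n i) = Xi n r u 0 (idx1 n i) * Ti n r u 0 i +
      crossSum u (Xi n r u 0 (idx0 n i)) (Xi n r u 0 (idx1 n i)) := by
  have h := RingQuot.mkAlgHom_rel ℂ (Rel.cross (u := u) (q := 0) i)
  simp only [zero_sub, neg_smul, one_smul, sub_neg_eq_add, map_mul, map_add, map_sum, map_smul,
    ← aeval_algHom_apply] at h
  exact h

theorem swapWord_of_eq {c : Fin n → Fin r} {i : Fin (n - 1)} (h : c (idx0 n i) = c (idx1 n i)) :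
    swapWord n r c i = c := by
  rw [swapWord, Equiv.comp_swap_eq_update, h, Function.update_eq_self, ← h,
    Function.update_eq_self]

theorem pairwise_commute_aeval_Xi (s : Set (Fin n)) (p : Fin n → ℂ[X]) :
    s.Pairwise (Function.onFun Commute fun j => aeval (Xi n r u q j) (p j)) :=
  fun j _ k _ _ => (commute_Xi_Xi j k).aeval_aeval _ _

theorem Lc_eq_noncommProd (c : Fin n → Fin r) :
    Lc n r u q c = univ.noncommProd (fun j => aeval (Xi n r u q j) (lagPoly r u (c j)))
      (pairwise_commute_aeval_Xi _ _) := by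
  simp [Lc, noncommProd]

theorem exists_Lc_eq_pairIdem_mul (i : Fin (n - 1)) (c : Fin n → Fin r) :
    ∃ R : AKSAlg n r u q, Commute (Ti n r u q i) R ∧
      Lc n r u q c =
        pairIdem u (Xi n r u q (idx0 n i)) (Xi n r u q (idx1 n i)) (c (idx0 n i)) (c (idx1 n i)) *
          R ∧
      Lc n r u q (swapWord n r c i) =
        pairIdem u (Xi n r u q (idx0 n i)) (Xi n r u q (idx1 n i)) (c (idx1 n i)) (c (idx0 n i)) *
          R := by
  have h01 : idx1 n i ∈ univ.erase (idx0 n i) :=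
    mem_erase.mpr ⟨fun h => by simp [idx0, idx1, Fin.ext_iff] at h, mem_univ _⟩
  refine ⟨((univ.erase (idx0 n i)).erase (idx1 n i)).noncommProd
    (fun j => aeval (Xi n r u q j) (lagPoly r u (c j)))
    (pairwise_commute_aeval_Xi _ _), ?_, ?_, ?_⟩
  · refine noncommProd_commute _ _ _ _ fun j hj => ?_
    obtain ⟨h1, h0⟩ := mem_erase.mp hj
    exact (commute_Ti_Xi i (mem_erase.mp h0).1 h1).aeval_right _
  · rw [Lc_eq_noncommProd,
      ← mul_noncommProd_erase _ (mem_univ _) _ _ (pairwise_commute_aeval_Xi _ _),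
      ← mul_noncommProd_erase _ h01 _ _ (pairwise_commute_aeval_Xi _ _), ← mul_assoc]
    rfl
  · rw [Lc_eq_noncommProd,
      ← mul_noncommProd_erase _ (mem_univ _) _ _ (pairwise_commute_aeval_Xi _ _),
      ← mul_noncommProd_erase _ h01 _ _ (pairwise_commute_aeval_Xi _ _), ← mul_assoc]
    congr 1
    · simp only [swapWord, Function.comp_apply, Equiv.swap_apply_left, Equiv.swap_apply_right]
      rfl
    · refine noncommProd_congr rfl (fun j hj => ?_) _
      obtain ⟨h1, h0⟩ := mem_erase.mp hj
      rw [swapWord, Function.comp_apply, Equiv.swap_apply_of_ne_of_ne (mem_erase.mp h0).1 h1]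

theorem Ti_mul_Lc_eq (hu : Function.Injective u) (i : Fin (n - 1)) (c : Fin n → Fin r) :
    Ti n r u 0 i * Lc n r u 0 c =
      Lc n r u 0 (swapWord n r c i) * Ti n r u 0 i -
        (if c (idx0 n i) < c (idx1 n i) then Lc n r u 0 c else 0) +
        (if c (idx1 n i) < c (idx0 n i) then Lc n r u 0 (swapWord n r c i) else 0) := by
  obtain ⟨R, hR, hc, hcσ⟩ := exists_Lc_eq_pairIdem_mul (u := u) (q := 0) i c
  rw [hc, hcσ, ← mul_assoc, mul_pairIdem hu (aeval_Xi_nodal _) (aeval_Xi_nodal _)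
    (commute_Xi_Xi _ _) (Ti_mul_Xi_idx0 i) (commute_Ti_Xi_add_Xi i), add_mul, sub_mul,
    mul_assoc _ _ R, hR.eq, ← mul_assoc, ite_mul, ite_mul, zero_mul]

theorem Ti_mul_Lc_general (n r : ℕ) (u : Fin r → ℂ)
    (hu : Function.Injective u) (i : Fin (n - 1)) (c : Fin n → Fin r) :
    (c (idx0 n i) < c (idx1 n i) →
      Ti n r u 0 i * Lc n r u 0 c =
        Lc n r u 0 (swapWord n r c i) * Ti n r u 0 i - Lc n r u 0 c) ∧
    (c (idx0 n i) = c (idx1 n i) →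
      Ti n r u 0 i * Lc n r u 0 c = Lc n r u 0 c * Ti n r u 0 i) ∧
    (c (idx1 n i) < c (idx0 n i) →
      Ti n r u 0 i * Lc n r u 0 c =
        Lc n r u 0 (swapWord n r c i) * Ti n r u 0 i + Lc n r u 0 (swapWord n r c i)) := by
  rw [Ti_mul_Lc_eq hu]
  refine ⟨fun hlt => ?_, fun heq => ?_, fun hgt => ?_⟩
  · rw [if_pos hlt, if_neg hlt.asymm, add_zero]
  · rw [if_neg heq.not_lt, if_neg heq.symm.not_lt, swapWord_of_eq heq, sub_zero, add_zero]
  · rw [if_neg hgt.asymm, if_pos hgt, sub_zero]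

/-- in `H_{n,r}(0)`,
`T_i L_c = L_{cσ_i} T_i − L_c` if `c_i < c_{i+1}`,
`T_i L_c = L_c T_i` if `c_i = c_{i+1}`, and
`T_i L_c = L_{cσ_i} T_i + L_{cσ_i}` if `c_i > c_{i+1}`. -/
theorem Ti_mul_Lc (n r : ℕ) (hn : 1 ≤ n) (hr : 1 ≤ r) (u : Fin r → ℂ)
    (hu : Function.Injective u) (i : Fin (n - 1)) (c : Fin n → Fin r) :
    (c (idx0 n i) < c (idx1 n i) →
      Ti n r u 0 i * Lc n r u 0 c =
        Lc n r u 0 (swapWord n r c i) * Ti n r u 0 i - Lc n r u 0 c) ∧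
    (c (idx0 n i) = c (idx1 n i) →
      Ti n r u 0 i * Lc n r u 0 c = Lc n r u 0 c * Ti n r u 0 i) ∧
    (c (idx1 n i) < c (idx0 n i) →
      Ti n r u 0 i * Lc n r u 0 c =
        Lc n r u 0 (swapWord n r c i) * Ti n r u 0 i + Lc n r u 0 (swapWord n r c i)) :=
  Ti_mul_Lc_general n r u hu i c

end AKS0
end
end

section
/- Every simple module over the 0-Ariki-Koike-Shoji algebra H_{n,r}(0) is one-dimensional over ℂ. -/
/-!
At `q = 0` the elements `π_i = -T_i` are idempotents satisfying the braid relations, and walking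
along the chains `π_{m-k+1} ⋯ π_m` produces a nonzero `v` on which every `T_i` acts by `-1` or `0`.
The `ξ_j` are simultaneously diagonalised by the idempotents `L_c`, and `T_i` maps the weight
space of `c` into the sum of those of `c` and `s_i c`. Weighting the positions so that the
potential `∑ W_j c_j` increases along exactly the swaps that would spoil an eigenvector, the
component `L_c v` of `v` of maximal potential is a common eigenvector of all generators. Its line
is therefore a submodule, hence all of `M`.
-/

noncomputable section

open Polynomial

section ListProd

variable {R A M : Type*} [CommSemiring R] [Semiring A] [Algebra R A]

lemma List.sum_prod_ofFn {κ : Type*} [Fintype κ] {m : ℕ} (G : Fin m → κ → A) :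
    ∑ c : Fin m → κ, (List.ofFn fun j => G j (c j)).prod =
      (List.ofFn fun j => ∑ k, G j k).prod := by
  induction m with
  | zero => simp
  | succ m ih =>
    rw [← (Fin.consEquiv fun _ => κ).sum_comp, Fintype.sum_prod_type, List.ofFn_succ,
      List.prod_cons, Finset.sum_mul, ← ih fun j => G j.succ]
    simp [Fin.consEquiv, List.ofFn_succ, Finset.mul_sum]

lemma List.mul_prod_ofFn_of_commute {m : ℕ} {F : Fin m → A} {a : A} {μ : R}
    (hcomm : ∀ l, Commute a (F l)) (j : Fin m) (hj : a * F j = μ • F j) :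
    a * (List.ofFn F).prod = μ • (List.ofFn F).prod := by
  induction m with
  | zero => exact j.elim0
  | succ m ih =>
    rw [List.ofFn_succ, List.prod_cons]
    cases j using Fin.cases with
    | zero => rw [← mul_assoc, hj, smul_mul_assoc]
    | succ j =>
      rw [← mul_assoc, (hcomm 0).eq, mul_assoc, ih (fun l => hcomm l.succ) j hj, mul_smul_comm]

lemma List.prod_ofFn_smul_of_smul_eq [AddCommMonoid M] [Module R M] [Module A M]
    [IsScalarTower R A M] {m : ℕ} {F : Fin m → A} {μ : Fin m → R} {y : M}
    (h : ∀ j, F j • y = μ j • y) : (List.ofFn F).prod • y = (∏ j, μ j) • y := by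
  induction m with
  | zero => simp
  | succ m ih =>
    rw [List.ofFn_succ, List.prod_cons, mul_smul, ih fun j => h j.succ, smul_comm, h 0,
      smul_smul, Fin.prod_univ_succ, mul_comm]

end ListProd

lemma Polynomial.aeval_smul_of_smul_eq {R A M : Type*} [CommRing R] [Semiring A] [Algebra R A]
    [AddCommGroup M] [Module R M] [Module A M] [IsScalarTower R A M] {x : A} {μ : R} {y : M}
    (h : x • y = μ • y) (p : R[X]) : aeval x p • y = p.eval μ • y := by
  rw [← Algebra.lsmul_apply (R := R) (B := R), ← aeval_algHom_apply]
  exact Module.End.aeval_apply_of_mem_apply_eq_smul h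

section IdempotentBraid

variable {A M : Type*} [Semiring A] [AddCommMonoid M] [Module A M] {π : ℕ → A} {m : ℕ}

/-- `chainWord π m k = π (m - k + 1) * ⋯ * π (m - 1) * π m` for `1 ≤ k ≤ m + 1`. -/
def chainWord (π : ℕ → A) (m : ℕ) : ℕ → A
  | 0 => 1
  | k + 1 => π (m - k) * chainWord π m k

lemma commute_chainWord (hcomm : ∀ i j, i + 2 ≤ j → j ≤ m → Commute (π i) (π j)) :
    ∀ k j, j + k < m → Commute (π j) (chainWord π m k)
  | 0, _, _ => Commute.one_right _
  | k + 1, j, h =>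
    (hcomm j (m - k) (by omega) (by omega)).mul_right (commute_chainWord hcomm k j (by omega))

lemma mul_chainWord_of_lt
    (hbraid : ∀ i, i + 1 ≤ m → π i * π (i + 1) * π i = π (i + 1) * π i * π (i + 1))
    (hcomm : ∀ i j, i + 2 ≤ j → j ≤ m → Commute (π i) (π j)) :
    ∀ k i, k ≤ m + 1 → m + 1 < i + k → i ≤ m →
      π i * chainWord π m k = chainWord π m k * π (i - 1)
  | 0, _, _, h, _ => absurd h (by omega)
  | k + 1, i, hk, h, hi => by
    rcases (show m + 1 < i + k ∨ i + k = m + 1 by omega) with h' | h'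
    · rw [chainWord, ← mul_assoc, ← (hcomm (m - k) i (by omega) hi).eq, mul_assoc,
        mul_chainWord_of_lt hbraid hcomm k i (by omega) h' hi, mul_assoc]
    · obtain ⟨k, rfl⟩ : ∃ k', k = k' + 1 := ⟨k - 1, by omega⟩
      obtain ⟨b, rfl⟩ : ∃ b, i = b + 1 := ⟨i - 1, by omega⟩
      have hb : m - (k + 1) = b := by omega
      have hb' : m - k = b + 1 := by omega
      simp only [chainWord, hb, hb', add_tsub_cancel_right]
      rw [← mul_assoc, ← mul_assoc, ← hbraid b (by omega), mul_assoc _ (π b),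
        (commute_chainWord hcomm k b (by omega)).eq]
      simp only [mul_assoc]

lemma exists_smul_eq_self_or_zero_succ (hidem : ∀ i ≤ m, IsIdempotentElem (π i))
    (hbraid : ∀ i, i + 1 ≤ m → π i * π (i + 1) * π i = π (i + 1) * π i * π (i + 1))
    (hcomm : ∀ i j, i + 2 ≤ j → j ≤ m → Commute (π i) (π j))
    {w : M} (hw : w ≠ 0) (hgood : ∀ i < m, π i • w = w ∨ π i • w = 0) :
    ∃ w' : M, w' ≠ 0 ∧ ∀ i ≤ m, π i • w' = w' ∨ π i • w' = 0 := by
  classical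
  let P k := chainWord π m k • w ≠ 0
  have hP0 : P 0 := by simpa [P, chainWord] using hw
  set K := Nat.findGreatest P (m + 1)
  have hK : P K := Nat.findGreatest_spec (Nat.zero_le _) hP0
  have hKle : K ≤ m + 1 := Nat.findGreatest_le _
  refine ⟨_, hK, fun i hi => ?_⟩
  rcases (show i + K < m ∨ i + K = m ∨ i + K = m + 1 ∨ m + 1 < i + K by omega)
    with h | h | h | h
  · rw [← mul_smul, (commute_chainWord hcomm K i h).eq, mul_smul]
    rcases hgood i (by omega) with h' | h' <;> simp [h']
  · -- `π i` prolongs the chain beyond its maximal nonvanishing length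
    right
    have hmax : ¬ P (K + 1) := Nat.findGreatest_is_greatest (Nat.lt_succ_self K) (by omega)
    simpa [P, chainWord, show m - K = i by omega, mul_smul] using hmax
  · left
    obtain ⟨K', hK'⟩ : ∃ K', K = K' + 1 := ⟨K - 1, by omega⟩
    rw [hK', chainWord, show m - K' = i by omega, ← mul_smul, ← mul_assoc, (hidem i hi).eq]
  · rw [← mul_smul, mul_chainWord_of_lt hbraid hcomm K i hKle h hi, mul_smul]
    rcases hgood (i - 1) (by omega) with h' | h' <;> simp [h']

theorem exists_smul_eq_self_or_zero (hidem : ∀ i < m, IsIdempotentElem (π i))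
    (hbraid : ∀ i, i + 1 < m → π i * π (i + 1) * π i = π (i + 1) * π i * π (i + 1))
    (hcomm : ∀ i j, i + 2 ≤ j → j < m → Commute (π i) (π j)) {v : M} (hv : v ≠ 0) :
    ∃ w : M, w ≠ 0 ∧ ∀ i < m, π i • w = w ∨ π i • w = 0 := by
  induction m with
  | zero => exact ⟨v, hv, by simp⟩
  | succ m ih =>
    obtain ⟨w, hw, hgood⟩ := ih (fun i hi => hidem i (by omega))
      (fun i hi => hbraid i (by omega)) (fun i j hij hj => hcomm i j hij (by omega))
    obtain ⟨w', hw', hgood'⟩ := exists_smul_eq_self_or_zero_succ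
      (fun i hi => hidem i (by omega)) (fun i hi => hbraid i (by omega))
      (fun i j hij hj => hcomm i j hij (by omega)) hw hgood
    exact ⟨w', hw', fun i hi => hgood' i (by omega)⟩

end IdempotentBraid

theorem finrank_eq_one_of_smul_mem_span {K A M : Type*} [Field K] [Ring A] [Algebra K A]
    [AddCommGroup M] [Module K M] [Module A M] [IsScalarTower K A M] [IsSimpleModule A M]
    {s : Set A} (hs : Algebra.adjoin K s = ⊤) {w : M} (hw : w ≠ 0)
    (hsw : ∀ a ∈ s, a • w ∈ K ∙ w) : Module.finrank K M = 1 := by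
  have hline : ∀ a : A, a • w ∈ K ∙ w := by
    intro a
    have ha : a ∈ Algebra.adjoin K s := hs ▸ Algebra.mem_top
    induction ha using Algebra.adjoin_induction with
    | mem a ha => exact hsw a ha
    | algebraMap k =>
      rw [algebraMap_smul]
      exact Submodule.smul_mem _ k (Submodule.mem_span_singleton_self w)
    | add a b _ _ ha hb =>
      rw [add_smul]
      exact add_mem ha hb
    | mul a b _ _ ha hb =>
      obtain ⟨c, hc⟩ := Submodule.mem_span_singleton.1 hb
      rw [mul_smul, ← hc, smul_comm]
      exact Submodule.smul_mem _ c ha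
  have hspan : Submodule.span A {w} = ⊤ :=
    (eq_bot_or_eq_top _).resolve_left (by simpa using hw)
  refine finrank_eq_one w hw fun m => ?_
  obtain ⟨a, rfl⟩ := Submodule.mem_span_singleton.1 (hspan ▸ Submodule.mem_top : m ∈ _)
  exact Submodule.mem_span_singleton.1 (hline a)

namespace AKS0

section Lagrange

variable {r : ℕ} {u : Fin r → ℂ} {A : Type*} [Ring A] [Algebra ℂ A]

lemma eval_lagPoly (hu : Function.Injective u) (k l : Fin r) :
    (lagPoly r u k).eval (u l) = if k = l then 1 else 0 := by
  split_ifs with h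
  · subst h
    exact Lagrange.eval_basis_self hu.injOn (Finset.mem_univ k)
  · exact Lagrange.eval_basis_of_ne h (Finset.mem_univ l)

lemma sum_aeval_lagPoly (hu : Function.Injective u) {x : A}
    (hx : aeval x (∏ l, (X - C (u l))) = 0) : ∑ k, aeval x (lagPoly r u k) = 1 := by
  rcases isEmpty_or_nonempty (Fin r) with hr | ⟨⟨k⟩⟩
  · -- for `r = 0` the hypothesis reads `1 = 0`
    have : Subsingleton A := subsingleton_of_zero_eq_one (by simpa using hx.symm)
    exact Subsingleton.elim _ _
  · rw [← map_sum, ← map_one (aeval (R := ℂ) x)]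
    exact congrArg (aeval x) (Lagrange.sum_basis hu.injOn ⟨k, Finset.mem_univ k⟩)

lemma mul_aeval_lagPoly {x : A} (hx : aeval x (∏ l, (X - C (u l))) = 0) (k : Fin r) :
    x * aeval x (lagPoly r u k) = u k • aeval x (lagPoly r u k) := by
  have hdvd : (X - C (u k)) * lagPoly r u k
      = C (∏ l ∈ Finset.univ.erase k, (u k - u l)⁻¹) * ∏ l, (X - C (u l)) := by
    rw [lagPoly, Finset.prod_mul_distrib, map_prod,
      ← Finset.mul_prod_erase Finset.univ _ (Finset.mem_univ k)]
    ring
  have h := congrArg (aeval x) hdvd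
  rw [map_mul, map_mul, hx, mul_zero, map_sub, aeval_X, aeval_C, sub_mul] at h
  rw [sub_eq_zero.mp h, Algebra.smul_def]

end Lagrange

section Relations

variable {n r : ℕ} {u : Fin r → ℂ} {q : ℂ}

lemma Ti_mul_self (i : Fin (n - 1)) : Ti n r u 0 i * Ti n r u 0 i = -Ti n r u 0 i := by
  have h : (Ti n r u 0 i - 0) * (Ti n r u 0 i + 1) = 0 := by
    simpa [Ti] using RingQuot.mkAlgHom_rel ℂ (Rel.quad (u := u) (q := 0) i)
  rwa [sub_zero, mul_add, mul_one, add_eq_zero_iff_eq_neg] at h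

lemma Ti_braid (i j : Fin (n - 1)) (h : (j : ℕ) = i + 1) :
    Ti n r u q i * Ti n r u q j * Ti n r u q i = Ti n r u q j * Ti n r u q i * Ti n r u q j := by
  simpa [Ti] using RingQuot.mkAlgHom_rel ℂ (Rel.braid (u := u) (q := q) i j h)

lemma Ti_commute (i j : Fin (n - 1)) (h : (i : ℕ) + 2 ≤ j ∨ (j : ℕ) + 2 ≤ i) :
    Commute (Ti n r u q i) (Ti n r u q j) :=
  (commute_iff_eq _ _).2 <| by
    simpa [Ti] using RingQuot.mkAlgHom_rel ℂ (Rel.commTT (u := u) (q := q) i j h)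

lemma aeval_Xi_prod (j : Fin n) : aeval (Xi n r u q j) (∏ l, (X - C (u l))) = 0 := by
  simpa [Xi, aeval_algHom_apply] using RingQuot.mkAlgHom_rel ℂ (Rel.xPoly (q := q) j)

lemma Xi_commute (i j : Fin n) : Commute (Xi n r u q i) (Xi n r u q j) :=
  (commute_iff_eq _ _).2 <| by
    simpa [Xi] using RingQuot.mkAlgHom_rel ℂ (Rel.commXX (u := u) (q := q) i j)

lemma Ti_mul_Xi_idx0_s8 (i : Fin (n - 1)) :
    Ti n r u q i * Xi n r u q (idx0 n i) = Xi n r u q (idx1 n i) * Ti n r u q i -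
      (q - 1) • ∑ p ∈ Finset.univ.filter (fun p : Fin r × Fin r => p.1 < p.2),
        (u p.2 - u p.1) • (aeval (Xi n r u q (idx0 n i)) (lagPoly r u p.1) *
          aeval (Xi n r u q (idx1 n i)) (lagPoly r u p.2)) := by
  simpa [Ti, Xi, aeval_algHom_apply] using
    RingQuot.mkAlgHom_rel ℂ (Rel.cross (u := u) (q := q) i)

lemma Ti_commute_Xi_add (i : Fin (n - 1)) :
    Commute (Ti n r u q i) (Xi n r u q (idx1 n i) + Xi n r u q (idx0 n i)) :=
  (commute_iff_eq _ _).2 <| by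
    simpa [Ti, Xi] using RingQuot.mkAlgHom_rel ℂ (Rel.sumComm (u := u) (q := q) i)

lemma Ti_commute_Xi (i : Fin (n - 1)) (j : Fin n) (h : j ≠ idx0 n i) (h' : j ≠ idx1 n i) :
    Commute (Ti n r u q i) (Xi n r u q j) :=
  (commute_iff_eq _ _).2 <| by
    simpa [Ti, Xi] using RingQuot.mkAlgHom_rel ℂ (Rel.commTX (u := u) (q := q) i j h h')

lemma adjoin_range_Ti_union_range_Xi :
    Algebra.adjoin ℂ (Set.range (Ti n r u q) ∪ Set.range (Xi n r u q)) = ⊤ := by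
  have : Sum.elim (Ti n r u q) (Xi n r u q) =
      RingQuot.mkAlgHom ℂ (Rel n r u q) ∘ FreeAlgebra.ι ℂ := by
    ext (i | j) <;> rfl
  rw [← Set.Sum.elim_range, this, Set.range_comp, ← AlgHom.map_adjoin,
    FreeAlgebra.adjoin_range_ι, Algebra.map_top, AlgHom.range_eq_top]
  exact RingQuot.mkAlgHom_surjective ℂ _

end Relations

section Swap

variable {n r : ℕ}

lemma idx0_ne_idx1 (i : Fin (n - 1)) : idx0 n i ≠ idx1 n i := by
  simp [idx0, idx1, Fin.ext_iff]

def swapAt (i : Fin (n - 1)) (c : Fin n → Fin r) : Fin n → Fin r :=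
  c ∘ Equiv.swap (idx0 n i) (idx1 n i)

lemma swapAt_involutive (i : Fin (n - 1)) : Function.Involutive (swapAt (r := r) i) :=
  fun c => by ext; simp [swapAt]

lemma swapAt_apply_idx0 (i : Fin (n - 1)) (c : Fin n → Fin r) :
    swapAt i c (idx0 n i) = c (idx1 n i) := by
  simp [swapAt]

lemma swapAt_apply_idx1 (i : Fin (n - 1)) (c : Fin n → Fin r) :
    swapAt i c (idx1 n i) = c (idx0 n i) := by
  simp [swapAt]

lemma swapAt_apply_of_ne (i : Fin (n - 1)) (c : Fin n → Fin r) {j : Fin n}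
    (h : j ≠ idx0 n i) (h' : j ≠ idx1 n i) : swapAt i c j = c j := by
  simp [swapAt, Equiv.swap_apply_of_ne_of_ne h h']

lemma swapAt_eq_self {i : Fin (n - 1)} {c : Fin n → Fin r}
    (h : c (idx0 n i) = c (idx1 n i)) : swapAt i c = c := by
  funext j
  simp only [swapAt, Function.comp_apply, Equiv.swap_apply_def]
  split_ifs <;> simp_all

lemma exists_idx1_eq_idx0_add (g : Fin (n - 1) → ℤ) :
    ∃ W : Fin n → ℤ, ∀ i, W (idx1 n i) = W (idx0 n i) + g i := by
  refine ⟨fun j => ∑ k ∈ Finset.range j, if h : k < n - 1 then g ⟨k, h⟩ else 0,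
    fun i => ?_⟩
  simp [idx0, idx1, Finset.sum_range_succ]

lemma sum_mul_swapAt (W : Fin n → ℤ) (i : Fin (n - 1)) (c : Fin n → Fin r) :
    ∑ j, W j * (swapAt i c j : ℤ) = ∑ j, W j * (c j : ℤ) +
      (W (idx1 n i) - W (idx0 n i)) * ((c (idx0 n i) : ℤ) - c (idx1 n i)) := by
  set σ := Equiv.swap (idx0 n i) (idx1 n i)
  have h : ∑ j, W j * (swapAt i c j : ℤ) = ∑ j, W (σ j) * (c j : ℤ) := by
    rw [← Equiv.sum_comp σ]
    simp [swapAt, σ]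
  rw [h, ← sub_eq_iff_eq_add', ← Finset.sum_sub_distrib,
    Fintype.sum_eq_add (idx0 n i) (idx1 n i) (idx0_ne_idx1 i)]
  · simp only [Equiv.swap_apply_left, Equiv.swap_apply_right, σ]
    ring
  · intro j hj
    simp [σ, Equiv.swap_apply_of_ne_of_ne hj.1 hj.2]

end Swap

section Idempotents

variable {n r : ℕ} {u : Fin r → ℂ} {q : ℂ}

lemma Xi_mul_Lc (j : Fin n) (c : Fin n → Fin r) :
    Xi n r u q j * Lc n r u q c = u (c j) • Lc n r u q c :=
  List.mul_prod_ofFn_of_commute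
    (fun l => Algebra.commute_of_mem_adjoin_singleton_of_commute
      (aeval_mem_adjoin_singleton ℂ _) (Xi_commute j l)) j
    (mul_aeval_lagPoly (aeval_Xi_prod j) (c j))

lemma sum_Lc (hu : Function.Injective u) : ∑ c, Lc n r u q c = 1 := by
  simp only [Lc]
  rw [List.sum_prod_ofFn fun j k => aeval (Xi n r u q j) (lagPoly r u k)]
  simp [sum_aeval_lagPoly hu (aeval_Xi_prod _)]

lemma sum_Lc_smul {M : Type*} [AddCommGroup M] [Module (AKSAlg n r u q) M]
    (hu : Function.Injective u) (x : M) : ∑ c, Lc n r u q c • x = x := by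
  rw [← Finset.sum_smul, sum_Lc hu, one_smul]

end Idempotents

/-- The coefficient making `T_i y + ascentCoeff q i c • y` a vector of weight `swapAt i c` for
`y` of weight `c`: at an ascent it compensates the `(q - 1)`-term of the cross relation. -/
def ascentCoeff {n r : ℕ} (q : ℂ) (i : Fin (n - 1)) (c : Fin n → Fin r) : ℂ :=
  if c (idx0 n i) < c (idx1 n i) then 1 - q else 0

section Weights

variable {n r : ℕ} {u : Fin r → ℂ} {q : ℂ}
  {M : Type*} [AddCommGroup M] [Module ℂ M] [Module (AKSAlg n r u q) M]
  [IsScalarTower ℂ (AKSAlg n r u q) M]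

variable (u q) in
def HasWeight (c : Fin n → Fin r) (y : M) : Prop := ∀ j, Xi n r u q j • y = u (c j) • y

lemma hasWeight_Lc_smul (c : Fin n → Fin r) (x : M) : HasWeight u q c (Lc n r u q c • x) :=
  fun j => by rw [← mul_smul, Xi_mul_Lc, smul_assoc]

lemma HasWeight.aeval_lagPoly_smul (hu : Function.Injective u) {d : Fin n → Fin r} {y : M}
    (hy : HasWeight u q d y) (j : Fin n) (k : Fin r) :
    aeval (Xi n r u q j) (lagPoly r u k) • y = if k = d j then y else 0 := by
  rw [aeval_smul_of_smul_eq (hy j), eval_lagPoly hu]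
  split_ifs <;> simp

lemma HasWeight.Lc_smul (hu : Function.Injective u) {d : Fin n → Fin r} {y : M}
    (hy : HasWeight u q d y) (c : Fin n → Fin r) :
    Lc n r u q c • y = if c = d then y else 0 := by
  have h := List.prod_ofFn_smul_of_smul_eq (μ := fun j => if c j = d j then (1 : ℂ) else 0)
    fun j => (hy.aeval_lagPoly_smul hu j (c j)).trans (by split_ifs <;> simp)
  rw [Lc, h]
  simp only [Fintype.prod_boole, ← funext_iff]
  split_ifs <;> simp

lemma HasWeight.cross_sum_smul (hu : Function.Injective u) {c : Fin n → Fin r} {y : M}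
    (hy : HasWeight u q c y) (i : Fin (n - 1)) :
    (∑ p ∈ Finset.univ.filter (fun p : Fin r × Fin r => p.1 < p.2),
        (u p.2 - u p.1) • (aeval (Xi n r u q (idx0 n i)) (lagPoly r u p.1) *
          aeval (Xi n r u q (idx1 n i)) (lagPoly r u p.2))) • y =
      (if c (idx0 n i) < c (idx1 n i) then u (c (idx1 n i)) - u (c (idx0 n i)) else 0) • y := by
  have hterm : ∀ p : Fin r × Fin r,
      ((u p.2 - u p.1) • (aeval (Xi n r u q (idx0 n i)) (lagPoly r u p.1) *
          aeval (Xi n r u q (idx1 n i)) (lagPoly r u p.2))) • y =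
        if p = (c (idx0 n i), c (idx1 n i)) then (u p.2 - u p.1) • y else 0 := by
    rintro ⟨k, l⟩
    simp only [smul_assoc, mul_smul, hy.aeval_lagPoly_smul hu, Prod.mk.injEq]
    split_ifs <;> simp_all [hy.aeval_lagPoly_smul hu]
  rw [Finset.sum_smul, Finset.sum_congr rfl fun p _ => hterm p, Finset.sum_ite_eq']
  simp only [Finset.mem_filter, Finset.mem_univ, true_and]
  split_ifs <;> simp

lemma HasWeight.Xi_idx1_smul_Ti_smul (hu : Function.Injective u) {c : Fin n → Fin r} {y : M}
    (hy : HasWeight u q c y) (i : Fin (n - 1)) :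
    Xi n r u q (idx1 n i) • Ti n r u q i • y = u (c (idx0 n i)) • Ti n r u q i • y -
      (ascentCoeff q i c * (u (c (idx1 n i)) - u (c (idx0 n i)))) • y := by
  have hcoeff : (q - 1) * (if c (idx0 n i) < c (idx1 n i) then
      u (c (idx1 n i)) - u (c (idx0 n i)) else 0) =
        -(ascentCoeff q i c * (u (c (idx1 n i)) - u (c (idx0 n i)))) := by
    unfold ascentCoeff
    split_ifs <;> ring
  have h : Ti n r u q i • u (c (idx0 n i)) • y = Xi n r u q (idx1 n i) • Ti n r u q i • y +
      (ascentCoeff q i c * (u (c (idx1 n i)) - u (c (idx0 n i)))) • y := by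
    rw [← hy (idx0 n i), ← mul_smul, Ti_mul_Xi_idx0_s8, sub_smul,
      mul_smul (Xi n r u q (idx1 n i)), smul_assoc, hy.cross_sum_smul hu, smul_smul (q - 1),
      hcoeff, neg_smul, sub_neg_eq_add]
  rw [← smul_comm (Ti n r u q i) (u (c (idx0 n i))) y, h, add_sub_cancel_right]

lemma HasWeight.Xi_idx0_smul_Ti_smul (hu : Function.Injective u) {c : Fin n → Fin r} {y : M}
    (hy : HasWeight u q c y) (i : Fin (n - 1)) :
    Xi n r u q (idx0 n i) • Ti n r u q i • y = u (c (idx1 n i)) • Ti n r u q i • y +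
      (ascentCoeff q i c * (u (c (idx1 n i)) - u (c (idx0 n i)))) • y := by
  have h := congrArg (· • y) (Ti_commute_Xi_add (u := u) (q := q) i).eq
  simp only [mul_smul, add_smul, hy (idx0 n i), hy (idx1 n i)] at h
  rw [smul_add, smul_comm (Ti n r u q i) _ y, smul_comm (Ti n r u q i) _ y,
    hy.Xi_idx1_smul_Ti_smul hu] at h
  generalize Xi n r u q (idx0 n i) • Ti n r u q i • y = w at h ⊢
  generalize Ti n r u q i • y = z at h ⊢
  linear_combination (norm := module) -h

lemma HasWeight.Ti_smul_add (hu : Function.Injective u) {c : Fin n → Fin r} {y : M}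
    (hy : HasWeight u q c y) (i : Fin (n - 1)) :
    HasWeight u q (swapAt i c) (Ti n r u q i • y + ascentCoeff q i c • y) := by
  intro j
  rw [smul_add, smul_comm (Xi n r u q j) (ascentCoeff q i c) y, hy j]
  by_cases h0 : j = idx0 n i
  · subst h0
    rw [swapAt_apply_idx0, hy.Xi_idx0_smul_Ti_smul hu]
    generalize Ti n r u q i • y = z
    module
  by_cases h1 : j = idx1 n i
  · subst h1
    rw [swapAt_apply_idx1, hy.Xi_idx1_smul_Ti_smul hu]
    generalize Ti n r u q i • y = z
    module
  rw [swapAt_apply_of_ne i c h0 h1, ← mul_smul, ← (Ti_commute_Xi i j h0 h1).eq, mul_smul, hy,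
    smul_comm (Ti n r u q i) (u (c j)) y, smul_comm (ascentCoeff q i c) (u (c j)) y, smul_add]

lemma Lc_smul_Ti_smul (hu : Function.Injective u) (i : Fin (n - 1)) (c : Fin n → Fin r)
    (x : M) :
    Lc n r u q c • Ti n r u q i • x =
      Ti n r u q i • Lc n r u q (swapAt i c) • x +
        ascentCoeff q i (swapAt i c) • Lc n r u q (swapAt i c) • x -
        ascentCoeff q i c • Lc n r u q c • x := by
  have hterm : ∀ d, Lc n r u q c • Ti n r u q i • Lc n r u q d • x =
      (if swapAt i c = d then
        Ti n r u q i • Lc n r u q d • x + ascentCoeff q i d • Lc n r u q d • x else 0) -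
      if c = d then ascentCoeff q i d • Lc n r u q d • x else 0 := by
    intro d
    have hy := hasWeight_Lc_smul (u := u) (q := q) d x
    conv_lhs => rw [← add_sub_cancel_right (Ti n r u q i • Lc n r u q d • x)
      (ascentCoeff q i d • Lc n r u q d • x)]
    rw [smul_sub, (hy.Ti_smul_add hu i).Lc_smul hu, smul_comm (Lc n r u q c) (ascentCoeff q i d),
      hy.Lc_smul hu, smul_ite, smul_zero]
    simp only [← (swapAt_involutive i).eq_iff]
  conv_lhs => rw [← sum_Lc_smul (n := n) (q := q) hu x]
  simp only [Finset.smul_sum, hterm, Finset.sum_sub_distrib, Finset.sum_ite_eq, Finset.mem_univ,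
    if_true]

lemma exists_Ti_smul_Lc_smul_eq_smul (hu : Function.Injective u) {v : M} {t : ℂ}
    {i : Fin (n - 1)} (hv : Ti n r u q i • v = t • v) (c : Fin n → Fin r)
    (hkill : swapAt i c ≠ c → t + ascentCoeff q i (swapAt i c) ≠ 0 →
      Lc n r u q (swapAt i c) • v = 0) :
    ∃ z : ℂ, Ti n r u q i • Lc n r u q c • v = z • Lc n r u q c • v := by
  have h := Lc_smul_Ti_smul (q := q) hu i (swapAt i c) v
  rw [swapAt_involutive i c, hv, smul_comm] at h
  have hT : Ti n r u q i • Lc n r u q c • v = (t + ascentCoeff q i (swapAt i c)) •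
      Lc n r u q (swapAt i c) • v - ascentCoeff q i c • Lc n r u q c • v := by
    generalize Ti n r u q i • Lc n r u q c • v = z at h ⊢
    generalize Lc n r u q c • v = w at h ⊢
    generalize Lc n r u q (swapAt i c) • v = w' at h ⊢
    linear_combination (norm := module) -h
  by_cases hfix : swapAt i c = c
  · refine ⟨t, ?_⟩
    rw [hT, hfix]
    generalize Lc n r u q c • v = w
    module
  · refine ⟨-ascentCoeff q i c, ?_⟩
    by_cases ht : t + ascentCoeff q i (swapAt i c) = 0
    · rw [hT, ht, zero_smul, zero_sub, neg_smul]
    · rw [hT, hkill hfix ht, smul_zero, zero_sub, neg_smul]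

end Weights

lemma exists_Ti_smul_eq_neg_or_zero {n r : ℕ} {u : Fin r → ℂ} {M : Type*} [AddCommGroup M]
    [Module (AKSAlg n r u 0) M] {v : M} (hv : v ≠ 0) :
    ∃ w : M, w ≠ 0 ∧ ∀ i, Ti n r u 0 i • w = -w ∨ Ti n r u 0 i • w = 0 := by
  let π : ℕ → AKSAlg n r u 0 := fun k => if h : k < n - 1 then -Ti n r u 0 ⟨k, h⟩ else 0
  have hπ : ∀ k (h : k < n - 1), π k = -Ti n r u 0 ⟨k, h⟩ := fun k h => dif_pos h
  obtain ⟨w, hw, hgood⟩ := exists_smul_eq_self_or_zero (π := π) (m := n - 1)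
    (fun i hi => by
      rw [hπ i hi, IsIdempotentElem, neg_mul_neg (Ti n r u 0 _) (Ti n r u 0 _), Ti_mul_self])
    (fun i hi => by
      set a := Ti n r u 0 ⟨i, by omega⟩
      set b := Ti n r u 0 ⟨i + 1, hi⟩
      rw [hπ i (by omega), hπ (i + 1) hi, neg_mul_neg a b, mul_neg (a * b) a, neg_mul_neg b a,
        mul_neg (b * a) b, Ti_braid _ _ rfl])
    (fun i j hij hj => by
      rw [hπ i (by omega), hπ j hj]
      exact ((Ti_commute _ _ (Or.inl hij)).neg_left).neg_right)
    hv
  refine ⟨w, hw, fun i => ?_⟩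
  have h := hgood i i.2
  rwa [hπ i i.2, neg_smul, neg_eq_iff_eq_neg, neg_eq_zero] at h

lemma exists_Lc_smul_ne_zero_forall_exists_Ti_smul_eq {n r : ℕ} {u : Fin r → ℂ} {M : Type*}
    [AddCommGroup M] [Module ℂ M] [Module (AKSAlg n r u 0) M]
    [IsScalarTower ℂ (AKSAlg n r u 0) M]
    (hu : Function.Injective u) {v : M} (hv : v ≠ 0)
    (hT : ∀ i, Ti n r u 0 i • v = -v ∨ Ti n r u 0 i • v = 0) :
    ∃ c, Lc n r u 0 c • v ≠ 0 ∧
      ∀ i, ∃ z : ℂ, Ti n r u 0 i • Lc n r u 0 c • v = z • Lc n r u 0 c • v := by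
  classical
  -- `W` grows across position `i` iff `T_i` kills `v`; then every swap of a maximiser `c` of
  -- `∑ W_j c_j` that `exists_Ti_smul_Lc_smul_eq_smul` cannot absorb leaves the support of `v`.
  obtain ⟨W, hW⟩ := exists_idx1_eq_idx0_add fun i => if Ti n r u 0 i • v = 0 then 1 else -1
  have hsupp : (Finset.univ.filter fun c => Lc n r u 0 c • v ≠ 0).Nonempty := by
    by_contra h
    refine hv ((sum_Lc_smul (n := n) (q := 0) hu v).symm.trans (Finset.sum_eq_zero fun c _ => ?_))
    by_contra hc
    exact h ⟨c, by simpa using hc⟩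
  obtain ⟨c, hc, hmax⟩ := Finset.exists_max_image _ (fun c => ∑ j, W j * (c j : ℤ)) hsupp
  refine ⟨c, (Finset.mem_filter.1 hc).2, fun i => ?_⟩
  have ht : Ti n r u 0 i • v = (if Ti n r u 0 i • v = 0 then 0 else -1 : ℂ) • v := by
    rcases hT i with h | h <;> simp [h, hv]
  refine exists_Ti_smul_Lc_smul_eq_smul hu ht c fun hne hβ => ?_
  by_contra hs
  have hle : ∑ j, W j * (swapAt i c j : ℤ) ≤ ∑ j, W j * (c j : ℤ) :=
    hmax _ (by simpa using hs)
  have hΦ := sum_mul_swapAt W i c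
  have hne' : c (idx0 n i) ≠ c (idx1 n i) := fun h => hne (swapAt_eq_self h)
  rw [hW i] at hΦ
  simp only [ascentCoeff, swapAt_apply_idx0, swapAt_apply_idx1, Fin.lt_def] at hβ
  rw [Ne, Fin.ext_iff] at hne'
  split_ifs at hβ hΦ <;> simp only [add_sub_cancel_left] at hΦ <;> norm_num at hβ <;> omega

theorem simple_modules_one_dimensional_general (n r : ℕ)
    (u : Fin r → ℂ) (hu : Function.Injective u)
    (M : Type) [AddCommGroup M] [Module ℂ M] [Module (AKSAlg n r u 0) M]
    [IsScalarTower ℂ (AKSAlg n r u 0) M] [IsSimpleModule (AKSAlg n r u 0) M] :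
    Module.finrank ℂ M = 1 := by
  have := IsSimpleModule.nontrivial (AKSAlg n r u 0) M
  obtain ⟨v, hv⟩ := exists_ne (0 : M)
  obtain ⟨v', hv', hT⟩ := exists_Ti_smul_eq_neg_or_zero (n := n) (u := u) hv
  obtain ⟨c, hc, hTc⟩ := exists_Lc_smul_ne_zero_forall_exists_Ti_smul_eq hu hv' hT
  refine finrank_eq_one_of_smul_mem_span (A := AKSAlg n r u 0) adjoin_range_Ti_union_range_Xi hc ?_
  rintro _ (⟨i, rfl⟩ | ⟨j, rfl⟩)
  · obtain ⟨z, hz⟩ := hTc i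
    exact hz ▸ Submodule.smul_mem _ z (Submodule.mem_span_singleton_self _)
  · rw [hasWeight_Lc_smul c v' j]
    exact Submodule.smul_mem _ _ (Submodule.mem_span_singleton_self _)

/-- every simple module over the 0-Ariki-Koike-Shoji algebra `H_{n,r}(0)`
is one-dimensional over `ℂ`. -/
theorem simple_modules_one_dimensional (n r : ℕ) (hn : 1 ≤ n) (hr : 1 ≤ r)
    (u : Fin r → ℂ) (hu : Function.Injective u)
    (M : Type) [AddCommGroup M] [Module ℂ M] [Module (AKSAlg n r u 0) M]
    [IsScalarTower ℂ (AKSAlg n r u 0) M] [IsSimpleModule (AKSAlg n r u 0) M] :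
    Module.finrank ℂ M = 1 :=
  simple_modules_one_dimensional_general n r u hu M

end AKS0
end
end

section
/- A ℂ-algebra homomorphism χ : H_{n,r}(0) → ℂ exists with prescribed values χ(ξ_j) and χ(T_i) if and only if there are a color word c ∈ C^n and scalars t_1,…,t_{n−1} ∈ {0,−1} such that χ(ξ_j) = u_{c_j} for all j, χ(T_i) = t_i for all i, and for every i: t_i = −1 whenever c_i < c_{i+1}, and t_i = 0 whenever c_i > c_{i+1} (t_i unconstrained in {0,−1} when c_i = c_{i+1}). Moreover distinct such pairs (c,t) define distinct homomorphisms, so the algebra homomorphisms H_{n,r}(0) → ℂ are in bijection with these pairs (c,t). -/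
noncomputable section

open Polynomial

namespace AKS0

/-- A pair `(c, t)` of a color word and eigenvalues for the `T_i` is admissible if
`t_i ∈ {0, −1}`, `t_i = −1` whenever `c_i < c_{i+1}`, and `t_i = 0` whenever
`c_i > c_{i+1}`. -/
def Admissible (n r : ℕ) (c : Fin n → Fin r) (t : Fin (n - 1) → ℂ) : Prop :=
  (∀ i, t i = 0 ∨ t i = -1) ∧
    ∀ i : Fin (n - 1),
      (c (idx0 n i) < c (idx1 n i) → t i = -1) ∧
      (c (idx1 n i) < c (idx0 n i) → t i = 0)

/-! A character of `H_{n,r}(0)` sends each `ξ_j` to a root of `∏ (X - u_l)`, i.e. to some `u_{c_j}`,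
and each `T_i` to a root of `T (T + 1)`. At such points the Lagrange polynomials are indicator
functions, so the cross relation becomes
`t_i u_{c_i} = u_{c_{i+1}} t_i + [c_i < c_{i+1}] (u_{c_{i+1}} - u_{c_i})`,
which is exactly admissibility. Conversely all other relations hold for admissible values (the
braid relation because `t_i² = -t_i`), so these values define a character of the quotient. -/

section

variable {r : ℕ} {u : Fin r → ℂ}

theorem aeval_prod_X_sub_C_eq_zero_iff (z : ℂ) :
    aeval z (∏ l : Fin r, (X - C (u l))) = 0 ↔ ∃ k, z = u k := by
  simp [Finset.prod_eq_zero_iff, sub_eq_zero]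

theorem aeval_lagPoly (hu : Function.Injective u) (m k : Fin r) :
    aeval (u m) (lagPoly r u k) = if m = k then 1 else 0 := by
  rw [lagPoly, map_prod]
  split_ifs with h
  · subst h
    refine Finset.prod_eq_one fun l hl => ?_
    have hne : u m - u l ≠ 0 := sub_ne_zero.mpr (hu.ne (Finset.ne_of_mem_erase hl).symm)
    simp [inv_mul_cancel₀ hne]
  · exact Finset.prod_eq_zero (Finset.mem_erase.mpr ⟨h, Finset.mem_univ m⟩) (by simp)

theorem algHom_lagPoly_cross_sum (hu : Function.Injective u) {A : Type*} [Ring A]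
    [Algebra ℂ A] (φ : A →ₐ[ℂ] ℂ) {x y : A} {a b : Fin r} (hx : φ x = u a) (hy : φ y = u b) :
    φ (∑ p ∈ Finset.univ.filter (fun p : Fin r × Fin r => p.1 < p.2),
        (u p.2 - u p.1) • (aeval x (lagPoly r u p.1) * aeval y (lagPoly r u p.2))) =
      if a < b then u b - u a else 0 := by
  have hterm : ∀ p : Fin r × Fin r,
      φ ((u p.2 - u p.1) • (aeval x (lagPoly r u p.1) * aeval y (lagPoly r u p.2))) =
        if (a, b) = p then u b - u a else 0 := by
    rintro ⟨p₁, p₂⟩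
    simp only [map_smul, map_mul, ← aeval_algHom_apply, hx, hy, aeval_lagPoly hu, smul_eq_mul,
      Prod.mk.injEq]
    split_ifs <;> simp_all
  simp [map_sum, hterm]

theorem mul_eq_mul_add_ite_iff (hu : Function.Injective u) {a b : Fin r} {t : ℂ} :
    t * u a = u b * t + (if a < b then u b - u a else 0) ↔
      (a < b → t = -1) ∧ (b < a → t = 0) := by
  rcases lt_trichotomy a b with hab | rfl | hab
  · have hne : u a - u b ≠ 0 := sub_ne_zero.mpr (hu.ne hab.ne)
    rw [if_pos hab]
    simp only [hab, not_lt_of_gt hab, true_implies, false_implies, and_true]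
    rw [← add_eq_zero_iff_eq_neg, ← mul_eq_zero_iff_right hne]
    constructor <;> intro h <;> linear_combination h
  · simp [mul_comm]
  · have hne : u a - u b ≠ 0 := sub_ne_zero.mpr (hu.ne hab.ne')
    rw [if_neg (not_lt_of_gt hab), add_zero]
    simp only [hab, not_lt_of_gt hab, true_implies, false_implies, true_and]
    rw [← mul_eq_zero_iff_right hne]
    constructor <;> intro h <;> linear_combination h

theorem respects_rel_iff_admissible (hu : Function.Injective u) {n : ℕ}
    (φ : FreeAKS n →ₐ[ℂ] ℂ) (c : Fin n → Fin r) (t : Fin (n - 1) → ℂ)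
    (hX : ∀ j, φ (xGen n j) = u (c j)) (hT : ∀ i, φ (tGen n i) = t i) :
    (∀ ⦃x y⦄, Rel n r u 0 x y → φ x = φ y) ↔ Admissible n r c t := by
  have quad_iff : ∀ i, φ ((tGen n i - algebraMap ℂ (FreeAKS n) 0) * (tGen n i + 1)) = φ 0 ↔
      t i = 0 ∨ t i = -1 := fun i => by
    simp [hT, mul_eq_zero, add_eq_zero_iff_eq_neg]
  have cross_iff : ∀ i, φ (tGen n i * xGen n (idx0 n i)) =
      φ (xGen n (idx1 n i) * tGen n i -
        (0 - 1 : ℂ) • ∑ p ∈ Finset.univ.filter (fun p : Fin r × Fin r => p.1 < p.2),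
          (u p.2 - u p.1) • (aeval (xGen n (idx0 n i)) (lagPoly r u p.1) *
            aeval (xGen n (idx1 n i)) (lagPoly r u p.2))) ↔
      (c (idx0 n i) < c (idx1 n i) → t i = -1) ∧ (c (idx1 n i) < c (idx0 n i) → t i = 0) :=
    fun i => by
      rw [map_mul, map_sub, map_mul, map_smul, algHom_lagPoly_cross_sum hu φ (hX _) (hX _),
        hX, hX, hT, zero_sub, neg_smul, one_smul, sub_neg_eq_add]
      exact mul_eq_mul_add_ite_iff hu
  refine ⟨fun h => ⟨fun i => (quad_iff i).mp (h (.quad i)),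
    fun i => (cross_iff i).mp (h (.cross i))⟩, fun hAdm x y h => ?_⟩
  have sq_eq_neg : ∀ i, t i * t i = -t i := fun i => by
    rcases hAdm.1 i with h | h <;> simp [h]
  induction h with
  | quad i => exact (quad_iff i).mpr (hAdm.1 i)
  | braid i j _ =>
    simp only [map_mul, hT]
    linear_combination t j * sq_eq_neg i - t i * sq_eq_neg j
  | commTT i j _ => simp only [map_mul, hT]; ring
  | xPoly j =>
    rw [← aeval_algHom_apply, hX, map_zero, aeval_prod_X_sub_C_eq_zero_iff]
    exact ⟨c j, rfl⟩
  | commXX i j => simp only [map_mul, hX]; ring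
  | cross i => exact (cross_iff i).mpr (hAdm.2 i)
  | sumComm i => simp only [map_mul, map_add, hT, hX]; ring
  | commTX i j _ _ => simp only [map_mul, hT, hX]; ring

theorem exists_admissible_of_algHom (hu : Function.Injective u) {n : ℕ}
    (χ : AKSAlg n r u 0 →ₐ[ℂ] ℂ) :
    ∃ c : Fin n → Fin r, Admissible n r c (fun i => χ (Ti n r u 0 i)) ∧
      ∀ j, χ (Xi n r u 0 j) = u (c j) := by
  set φ := χ.comp (RingQuot.mkAlgHom ℂ (Rel n r u 0))
  have hrel : ∀ ⦃x y⦄, Rel n r u 0 x y → φ x = φ y := fun _ _ h =>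
    congrArg χ (RingQuot.mkAlgHom_rel ℂ h)
  have hcolor : ∀ j, ∃ k, χ (Xi n r u 0 j) = u k := fun j => by
    have h := hrel (.xPoly j)
    rwa [← aeval_algHom_apply, map_zero, aeval_prod_X_sub_C_eq_zero_iff] at h
  choose c hc using hcolor
  exact ⟨c, (respects_rel_iff_admissible hu φ c _ hc fun _ => rfl).mp hrel, hc⟩

theorem AKSAlg.algHom_ext {n : ℕ} {q : ℂ} {A : Type*} [Semiring A] [Algebra ℂ A]
    {χ₁ χ₂ : AKSAlg n r u q →ₐ[ℂ] A} (hX : ∀ j, χ₁ (Xi n r u q j) = χ₂ (Xi n r u q j))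
    (hT : ∀ i, χ₁ (Ti n r u q i) = χ₂ (Ti n r u q i)) : χ₁ = χ₂ :=
  RingQuot.ringQuot_ext' ℂ _ _ <| FreeAlgebra.hom_ext <| funext fun
    | Sum.inl i => hT i
    | Sum.inr j => hX j

def admissibleCharacter (hu : Function.Injective u) {n : ℕ} (c : Fin n → Fin r)
    (t : Fin (n - 1) → ℂ) (hAdm : Admissible n r c t) : AKSAlg n r u 0 →ₐ[ℂ] ℂ :=
  RingQuot.liftAlgHom ℂ ⟨FreeAlgebra.lift ℂ (Sum.elim t (u ∘ c)),
    (respects_rel_iff_admissible hu _ c t (fun _ => FreeAlgebra.lift_ι_apply _ _)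
      (fun _ => FreeAlgebra.lift_ι_apply _ _)).mpr hAdm⟩

theorem admissibleCharacter_Xi (hu : Function.Injective u) {n : ℕ} {c : Fin n → Fin r}
    {t : Fin (n - 1) → ℂ} (hAdm : Admissible n r c t) (j : Fin n) :
    admissibleCharacter hu c t hAdm (Xi n r u 0 j) = u (c j) := by
  rw [admissibleCharacter, Xi, RingQuot.liftAlgHom_mkAlgHom_apply, xGen,
    FreeAlgebra.lift_ι_apply]
  rfl

theorem admissibleCharacter_Ti (hu : Function.Injective u) {n : ℕ} {c : Fin n → Fin r}
    {t : Fin (n - 1) → ℂ} (hAdm : Admissible n r c t) (i : Fin (n - 1)) :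
    admissibleCharacter hu c t hAdm (Ti n r u 0 i) = t i := by
  rw [admissibleCharacter, Ti, RingQuot.liftAlgHom_mkAlgHom_apply, tGen,
    FreeAlgebra.lift_ι_apply]
  rfl

theorem existsUnique_algHom_of_admissible (hu : Function.Injective u) {n : ℕ}
    {c : Fin n → Fin r} {t : Fin (n - 1) → ℂ} (hAdm : Admissible n r c t) :
    ∃! χ : AKSAlg n r u 0 →ₐ[ℂ] ℂ,
      (∀ j, χ (Xi n r u 0 j) = u (c j)) ∧ (∀ i, χ (Ti n r u 0 i) = t i) :=
  ⟨admissibleCharacter hu c t hAdm,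
    ⟨admissibleCharacter_Xi hu hAdm, admissibleCharacter_Ti hu hAdm⟩,
    fun _ ⟨hX, hT⟩ => AKSAlg.algHom_ext (fun j => by rw [hX, admissibleCharacter_Xi])
      (fun i => by rw [hT, admissibleCharacter_Ti])⟩

end

theorem algHom_classification_general (n r : ℕ)
    (u : Fin r → ℂ) (hu : Function.Injective u) :
    (∀ (f : Fin n → ℂ) (g : Fin (n - 1) → ℂ),
      (∃ χ : AKSAlg n r u 0 →ₐ[ℂ] ℂ, (∀ j, χ (Xi n r u 0 j) = f j) ∧
          (∀ i, χ (Ti n r u 0 i) = g i)) ↔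
        (∃ (c : Fin n → Fin r) (t : Fin (n - 1) → ℂ), Admissible n r c t ∧
          (∀ j, f j = u (c j)) ∧ (∀ i, g i = t i))) ∧
    (∀ (c : Fin n → Fin r) (t : Fin (n - 1) → ℂ), Admissible n r c t →
      ∃! χ : AKSAlg n r u 0 →ₐ[ℂ] ℂ,
        (∀ j, χ (Xi n r u 0 j) = u (c j)) ∧ (∀ i, χ (Ti n r u 0 i) = t i)) ∧
    (∀ (c c' : Fin n → Fin r) (t t' : Fin (n - 1) → ℂ),
      Admissible n r c t → Admissible n r c' t' →
      ∀ χ : AKSAlg n r u 0 →ₐ[ℂ] ℂ,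
        (∀ j, χ (Xi n r u 0 j) = u (c j)) → (∀ i, χ (Ti n r u 0 i) = t i) →
        (∀ j, χ (Xi n r u 0 j) = u (c' j)) → (∀ i, χ (Ti n r u 0 i) = t' i) →
        c = c' ∧ t = t') := by
  refine ⟨fun f g => ⟨?_, ?_⟩, fun _ _ => existsUnique_algHom_of_admissible hu, ?_⟩
  · rintro ⟨χ, hf, hg⟩
    obtain ⟨c, hAdm, hc⟩ := exists_admissible_of_algHom hu χ
    rw [show (fun i => χ (Ti n r u 0 i)) = g from funext hg] at hAdm
    exact ⟨c, g, hAdm, fun j => (hf j).symm.trans (hc j), fun _ => rfl⟩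
  · rintro ⟨c, t, hAdm, hf, hg⟩
    obtain ⟨χ, ⟨hX, hT⟩, -⟩ := existsUnique_algHom_of_admissible hu hAdm
    exact ⟨χ, fun j => (hX j).trans (hf j).symm, fun i => (hT i).trans (hg i).symm⟩
  · intro c c' t t' _ _ χ hX hT hX' hT'
    exact ⟨funext fun j => hu ((hX j).symm.trans (hX' j)),
      funext fun i => (hT i).symm.trans (hT' i)⟩

/-- a `ℂ`-algebra homomorphism `χ : H_{n,r}(0) → ℂ` with prescribed values
on the generators exists iff those values come from an admissible pair `(c, t)` (and then
it is unique), every `χ` arises this way, and distinct admissible pairs give distinct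
homomorphisms. -/
theorem algHom_classification (n r : ℕ) (hn : 1 ≤ n) (hr : 1 ≤ r)
    (u : Fin r → ℂ) (hu : Function.Injective u) :
    (∀ (f : Fin n → ℂ) (g : Fin (n - 1) → ℂ),
      (∃ χ : AKSAlg n r u 0 →ₐ[ℂ] ℂ, (∀ j, χ (Xi n r u 0 j) = f j) ∧
          (∀ i, χ (Ti n r u 0 i) = g i)) ↔
        (∃ (c : Fin n → Fin r) (t : Fin (n - 1) → ℂ), Admissible n r c t ∧
          (∀ j, f j = u (c j)) ∧ (∀ i, g i = t i))) ∧
    (∀ (c : Fin n → Fin r) (t : Fin (n - 1) → ℂ), Admissible n r c t →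
      ∃! χ : AKSAlg n r u 0 →ₐ[ℂ] ℂ,
        (∀ j, χ (Xi n r u 0 j) = u (c j)) ∧ (∀ i, χ (Ti n r u 0 i) = t i)) ∧
    (∀ (c c' : Fin n → Fin r) (t t' : Fin (n - 1) → ℂ),
      Admissible n r c t → Admissible n r c' t' →
      ∀ χ : AKSAlg n r u 0 →ₐ[ℂ] ℂ,
        (∀ j, χ (Xi n r u 0 j) = u (c j)) → (∀ i, χ (Ti n r u 0 i) = t i) →
        (∀ j, χ (Xi n r u 0 j) = u (c' j)) → (∀ i, χ (Ti n r u 0 i) = t' i) →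
        c = c' ∧ t = t') :=
  algHom_classification_general n r u hu

end AKS0
end
end
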